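/- Let T_1, T_2 be independent random variables with pdfs f_j(t) = x_j e^{tY_j} z_j on [0,∞), and let Y_j^I = [[0, x_j],[0, Y_j]]. Then the cdf of max(T_1, T_2) at t equals the (1, d_1^I + d_2^I) entry of e^{t (Y_1^I ⊕ Y_2^I)}, where d_j^I = d_j + 1; equivalently it equals the product (e^{t Y_1^I})_{1,d_1^I} · (e^{t Y_2^I})_{1,d_2^I}. -/

import Mathlib

/-!
By independence, `P(max(T₁, T₂) ≤ t) = F⁽¹⁾(t) F⁽²⁾(t)`. For `Yᴵ = [[0, x], [0, Y]]` the
top-right block of `e^{sYᴵ}` has derivative `x e^{sY}` (the bottom-right block of `e^{sYᴵ}`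
is `e^{sY}`) and vanishes at `s = 0`, so it is `∫₀ˢ x e^{uY} du`; hence
`F⁽ʲ⁾(t) = (e^{tYⱼᴵ})_{1,dⱼᴵ}`. Finally `A ⊗ 1` and `1 ⊗ B` commute, so
`e^{t(A ⊕ B)} = e^{tA} ⊗ e^{tB}`, whose `(1, d₁ᴵ + d₂ᴵ)` entry is the product of the two.
-/

open Matrix MeasureTheory intervalIntegral
open scoped Kronecker ProbabilityTheory Nat
open NormedSpace

namespace Matrix

variable {l m n p α : Type*} [Fintype l] [DecidableEq l] [Fintype m] [DecidableEq m]
  [Fintype n] [DecidableEq n] [Fintype p] [DecidableEq p]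

theorem fromBlocks_zero₂₁_pow [CommRing α] (A : Matrix l l α) (B : Matrix l m α)
    (D : Matrix m m α) (k : ℕ) :
    ∃ C, fromBlocks A B 0 D ^ k = fromBlocks (A ^ k) C 0 (D ^ k) := by
  induction k with
  | zero => exact ⟨0, by simp [fromBlocks_one]⟩
  | succ k ih =>
    obtain ⟨C, hC⟩ := ih
    exact ⟨A ^ k * B + C * D, by simp [pow_succ, hC, fromBlocks_multiply]⟩

section RCLike

variable {𝕂 : Type*} [RCLike 𝕂]

theorem hasSum_exp_apply (M : Matrix n n 𝕂) (i j : n) :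
    HasSum (fun k => ((k !⁻¹ : 𝕂) • M ^ k) i j) (exp M i j) := by
  open scoped Norms.Operator in
  rw [exp_eq_tsum 𝕂]
  exact Pi.hasSum.mp (Pi.hasSum.mp (expSeries_summable' M).hasSum i) j

theorem exp_fromBlocks_zero₂₁_inr_inr (A : Matrix l l 𝕂) (B : Matrix l m 𝕂)
    (D : Matrix m m 𝕂) (i j : m) :
    exp (fromBlocks A B 0 D) (Sum.inr i) (Sum.inr j) = exp D i j := by
  refine (hasSum_exp_apply _ _ _).unique ((hasSum_exp_apply D i j).congr_fun fun k => ?_)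
  obtain ⟨C, hC⟩ := fromBlocks_zero₂₁_pow A B D k
  simp [hC]

theorem exp_kronecker_one (A : Matrix n n 𝕂) :
    exp (A ⊗ₖ (1 : Matrix p p 𝕂)) = exp A ⊗ₖ (1 : Matrix p p 𝕂) := by
  open scoped Norms.Operator in
  let f : Matrix n n 𝕂 →ₐ[𝕂] Matrix (n × p) (n × p) 𝕂 :=
    (kroneckerAlgEquiv n p 𝕂).toAlgHom.comp Algebra.TensorProduct.includeLeft
  have h := map_exp f (LinearMap.continuous_of_finiteDimensional f.toLinearMap) A
  simp only [f, AlgHom.coe_comp, Function.comp_apply,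
    Algebra.TensorProduct.includeLeft_apply] at h
  exact h.symm

theorem exp_one_kronecker (B : Matrix p p 𝕂) :
    exp ((1 : Matrix n n 𝕂) ⊗ₖ B) = (1 : Matrix n n 𝕂) ⊗ₖ exp B := by
  open scoped Norms.Operator in
  let f : Matrix p p 𝕂 →ₐ[𝕂] Matrix (n × p) (n × p) 𝕂 :=
    (kroneckerAlgEquiv n p 𝕂).toAlgHom.comp Algebra.TensorProduct.includeRight
  have h := map_exp f (LinearMap.continuous_of_finiteDimensional f.toLinearMap) B
  simp only [f, AlgHom.coe_comp, Function.comp_apply,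
    Algebra.TensorProduct.includeRight_apply] at h
  exact h.symm

theorem exp_kronecker_one_add_one_kronecker (A : Matrix n n 𝕂) (B : Matrix p p 𝕂) :
    exp (A ⊗ₖ (1 : Matrix p p 𝕂) + (1 : Matrix n n 𝕂) ⊗ₖ B) = exp A ⊗ₖ exp B := by
  have hcomm : Commute (A ⊗ₖ (1 : Matrix p p 𝕂)) ((1 : Matrix n n 𝕂) ⊗ₖ B) := by
    simp only [Commute, SemiconjBy, ← mul_kronecker_mul, Matrix.mul_one, Matrix.one_mul]
  rw [exp_add_of_commute _ _ hcomm, exp_kronecker_one, exp_one_kronecker, ← mul_kronecker_mul,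
    Matrix.mul_one, Matrix.one_mul]

end RCLike

theorem hasDerivAt_exp_smul_fromBlocks_apply_inl_inr (x : Matrix l m ℝ) (Y : Matrix m m ℝ)
    (i : l) (j : m) (u : ℝ) :
    HasDerivAt
      (fun s : ℝ => exp (s • fromBlocks (0 : Matrix l l ℝ) x 0 Y) (Sum.inl i) (Sum.inr j))
      ((x * exp (u • Y)) i j) u := by
  open scoped Norms.Operator in
  have hexp := hasDerivAt_exp_smul_const' (𝕂 := ℝ) (fromBlocks (0 : Matrix l l ℝ) x 0 Y) u
  have hentry := (entryLinearMap ℝ ℝ (Sum.inl i : l ⊕ m) (Sum.inr j : l ⊕ m)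
    ).toContinuousLinearMap.hasFDerivAt.comp_hasDerivAt u hexp
  refine hentry.congr_deriv ?_
  -- `simp` cannot see through `toContinuousLinearMap` taken w.r.t. the operator-norm instances
  change (fromBlocks (0 : Matrix l l ℝ) x 0 Y *
    exp (u • fromBlocks (0 : Matrix l l ℝ) x 0 Y)) (Sum.inl i) (Sum.inr j) = _
  simp [mul_apply, fromBlocks_smul, exp_fromBlocks_zero₂₁_inr_inr]

theorem integral_mul_exp_smul_apply (x : Matrix l m ℝ) (Y : Matrix m m ℝ) (i : l) (j : m)
    (t : ℝ) :
    ∫ u in (0 : ℝ)..t, (x * exp (u • Y)) i j =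
      exp (t • fromBlocks (0 : Matrix l l ℝ) x 0 Y) (Sum.inl i) (Sum.inr j) := by
  have hcont : Continuous fun u : ℝ => (x * exp (u • Y)) i j := by
    open scoped Norms.Operator in fun_prop
  rw [integral_eq_sub_of_hasDerivAt (fun u _ => hasDerivAt_exp_smul_fromBlocks_apply_inl_inr
    x Y i j u) (hcont.intervalIntegrable 0 t)]
  simp

end Matrix

theorem ProbabilityTheory.IndepFun.measure_max_le_eq_mul {Ω β : Type*} [MeasurableSpace Ω]
    {μ : Measure Ω} [LinearOrder β] [TopologicalSpace β] [OrderClosedTopology β]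
    [MeasurableSpace β] [OpensMeasurableSpace β] {X Y : Ω → β}
    (h : ProbabilityTheory.IndepFun X Y μ) (t : β) :
    μ {ω | max (X ω) (Y ω) ≤ t} = μ {ω | X ω ≤ t} * μ {ω | Y ω ≤ t} := by
  simp only [max_le_iff]
  exact h.measure_inter_preimage_eq_mul _ _ measurableSet_Iic measurableSet_Iic

theorem cdf_max_me_distributed_general {Ω : Type*} [MeasureSpace Ω]
    {d₁ d₂ : ℕ}
    (x₁ : Matrix (Fin 1) (Fin (d₁ + 1)) ℝ) (Y₁ : Matrix (Fin (d₁ + 1)) (Fin (d₁ + 1)) ℝ)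
    (x₂ : Matrix (Fin 1) (Fin (d₂ + 1)) ℝ) (Y₂ : Matrix (Fin (d₂ + 1)) (Fin (d₂ + 1)) ℝ)
    (T₁ T₂ : Ω → ℝ)
    (hindep : ProbabilityTheory.IndepFun T₁ T₂ ℙ)
    (hcdf₁ : ∀ t : ℝ, 0 ≤ t → (ℙ {ω | T₁ ω ≤ t}).toReal =
      ∫ u in (0 : ℝ)..t, (x₁ * NormedSpace.exp (u • Y₁)) 0 (Fin.last d₁))
    (hcdf₂ : ∀ t : ℝ, 0 ≤ t → (ℙ {ω | T₂ ω ≤ t}).toReal =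
      ∫ u in (0 : ℝ)..t, (x₂ * NormedSpace.exp (u • Y₂)) 0 (Fin.last d₂))
    (t : ℝ) (ht : 0 ≤ t) :
    (ℙ {ω | max (T₁ ω) (T₂ ω) ≤ t}).toReal =
      NormedSpace.exp
        (t • (Matrix.fromBlocks (0 : Matrix (Fin 1) (Fin 1) ℝ) x₁ 0 Y₁ ⊗ₖ
              (1 : Matrix (Fin 1 ⊕ Fin (d₂ + 1)) (Fin 1 ⊕ Fin (d₂ + 1)) ℝ) +
            (1 : Matrix (Fin 1 ⊕ Fin (d₁ + 1)) (Fin 1 ⊕ Fin (d₁ + 1)) ℝ) ⊗ₖ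
              Matrix.fromBlocks (0 : Matrix (Fin 1) (Fin 1) ℝ) x₂ 0 Y₂))
        (Sum.inl 0, Sum.inl 0) (Sum.inr (Fin.last d₁), Sum.inr (Fin.last d₂)) ∧
    (ℙ {ω | max (T₁ ω) (T₂ ω) ≤ t}).toReal =
      NormedSpace.exp (t • Matrix.fromBlocks (0 : Matrix (Fin 1) (Fin 1) ℝ) x₁ 0 Y₁)
          (Sum.inl 0) (Sum.inr (Fin.last d₁)) *
        NormedSpace.exp (t • Matrix.fromBlocks (0 : Matrix (Fin 1) (Fin 1) ℝ) x₂ 0 Y₂)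
          (Sum.inl 0) (Sum.inr (Fin.last d₂)) := by
  have hmax : (ℙ {ω | max (T₁ ω) (T₂ ω) ≤ t}).toReal =
      (ℙ {ω | T₁ ω ≤ t}).toReal * (ℙ {ω | T₂ ω ≤ t}).toReal := by
    rw [hindep.measure_max_le_eq_mul t, ENNReal.toReal_mul]
  rw [hmax, hcdf₁ t ht, hcdf₂ t ht, integral_mul_exp_smul_apply, integral_mul_exp_smul_apply,
    smul_add, ← smul_kronecker, ← kronecker_smul, exp_kronecker_one_add_one_kronecker,
    kroneckerMap_apply]
  exact ⟨rfl, rfl⟩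

/-- CDF of the maximum of two independent ME-distributed random variables:
it equals the `(1, d₁ᴵ + d₂ᴵ)` entry of `e^{t(Y₁ᴵ ⊕ Y₂ᴵ)}`, and also equals
the product of the corresponding entries of `e^{t Y₁ᴵ}` and `e^{t Y₂ᴵ}`. -/
theorem cdf_max_me_distributed {Ω : Type*} [MeasureSpace Ω]
    [IsProbabilityMeasure (ℙ : Measure Ω)]
    {d₁ d₂ : ℕ}
    (x₁ : Matrix (Fin 1) (Fin (d₁ + 1)) ℝ) (Y₁ : Matrix (Fin (d₁ + 1)) (Fin (d₁ + 1)) ℝ)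
    (x₂ : Matrix (Fin 1) (Fin (d₂ + 1)) ℝ) (Y₂ : Matrix (Fin (d₂ + 1)) (Fin (d₂ + 1)) ℝ)
    (T₁ T₂ : Ω → ℝ)
    (hm₁ : Measurable T₁) (hm₂ : Measurable T₂)
    (hindep : ProbabilityTheory.IndepFun T₁ T₂ ℙ)
    (hcdf₁ : ∀ t : ℝ, 0 ≤ t → (ℙ {ω | T₁ ω ≤ t}).toReal =
      ∫ u in (0 : ℝ)..t, (x₁ * NormedSpace.exp (u • Y₁)) 0 (Fin.last d₁))
    (hcdf₂ : ∀ t : ℝ, 0 ≤ t → (ℙ {ω | T₂ ω ≤ t}).toReal =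
      ∫ u in (0 : ℝ)..t, (x₂ * NormedSpace.exp (u • Y₂)) 0 (Fin.last d₂))
    (t : ℝ) (ht : 0 ≤ t) :
    (ℙ {ω | max (T₁ ω) (T₂ ω) ≤ t}).toReal =
      NormedSpace.exp
        (t • (Matrix.fromBlocks (0 : Matrix (Fin 1) (Fin 1) ℝ) x₁ 0 Y₁ ⊗ₖ
              (1 : Matrix (Fin 1 ⊕ Fin (d₂ + 1)) (Fin 1 ⊕ Fin (d₂ + 1)) ℝ) +
            (1 : Matrix (Fin 1 ⊕ Fin (d₁ + 1)) (Fin 1 ⊕ Fin (d₁ + 1)) ℝ) ⊗ₖ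
              Matrix.fromBlocks (0 : Matrix (Fin 1) (Fin 1) ℝ) x₂ 0 Y₂))
        (Sum.inl 0, Sum.inl 0) (Sum.inr (Fin.last d₁), Sum.inr (Fin.last d₂)) ∧
    (ℙ {ω | max (T₁ ω) (T₂ ω) ≤ t}).toReal =
      NormedSpace.exp (t • Matrix.fromBlocks (0 : Matrix (Fin 1) (Fin 1) ℝ) x₁ 0 Y₁)
          (Sum.inl 0) (Sum.inr (Fin.last d₁)) *
        NormedSpace.exp (t • Matrix.fromBlocks (0 : Matrix (Fin 1) (Fin 1) ℝ) x₂ 0 Y₂)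
          (Sum.inl 0) (Sum.inr (Fin.last d₂)) :=
  cdf_max_me_distributed_general x₁ Y₁ x₂ Y₂ T₁ T₂ hindep hcdf₁ hcdf₂ t ht
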